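/- arXiv:1406.1653 — 3 statements merged into one kernel-verified Lean document; each statement's English description precedes it below -/
import Mathlib

section
/- Let a, b be integers with 1 ≤ a ≤ b, set n = ab, and let μ = (b^a) be the rectangular partition of n with a rows of length b. Then f^μ ≥ (n! / (b!)^a) · 2^{−2n}. -/
/-- The rectangular Young diagram with `a` rows of length `b`. -/
def rect (a b : ℕ) : YoungDiagram where
  cells := Finset.range a ×ˢ Finset.range b
  isLowerSet := by
    intro x y h hm
    simp only [Finset.coe_product, Set.mem_prod, Set.mem_setOf_eq, Finset.mem_coe, Finset.mem_range] at hm ⊢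
    obtain ⟨h1, h2⟩ := h
    exact ⟨lt_of_le_of_lt h1 hm.1, lt_of_le_of_lt h2 hm.2⟩

/-- The hook length of the (0-indexed) cell `(i, j)` of a Young diagram. -/
def hookLen (μ : YoungDiagram) (i j : ℕ) : ℕ :=
  (μ.rowLen i - (j + 1)) + (μ.colLen j - (i + 1)) + 1

/-- `T : ℕ × ℕ → ℕ` is a standard Young tableau of shape `μ` (with `μ.card` cells):
it fills the cells of `μ` bijectively with the numbers `1, …, μ.card`, is zero
outside `μ`, and is strictly increasing along rows and down columns. -/
def IsSYT (μ : YoungDiagram) (T : ℕ × ℕ → ℕ) : Prop :=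
  (∀ c ∈ μ.cells, T c ∈ Finset.Icc 1 μ.card) ∧
  (∀ c ∉ μ.cells, T c = 0) ∧
  Set.InjOn T ↑μ.cells ∧
  (∀ i j1 j2 : ℕ, j1 < j2 → (i, j2) ∈ μ → T (i, j1) < T (i, j2)) ∧
  (∀ i1 i2 j : ℕ, i1 < i2 → (i2, j) ∈ μ → T (i1, j) < T (i2, j))

/-- `fdeg μ`, the degree of the ordinary irreducible character of the symmetric
group associated to `μ`, i.e. the number of standard Young tableaux of shape `μ`. -/
noncomputable def fdeg (μ : YoungDiagram) : ℕ :=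
  Nat.card { T : ℕ × ℕ → ℕ // IsSYT μ T }

/-- The diagonal (Durfee square size) of a Young diagram: the number of diagonal
cells, i.e. the side of the largest square contained in it. -/
def durfee (μ : YoungDiagram) : ℕ :=
  (μ.cells.filter fun c => c.1 = c.2).card

open Classical in
/-- The quantity ρ of the paper: `δ²` when `α ∈ ℕ`, and `⌊δ²/(α − ⌊α⌋)⌋ + 1` otherwise. -/
noncomputable def rho (α : ℝ) (δ : ℕ) : ℕ :=
  if ∃ m : ℕ, (m : ℝ) = α then δ ^ 2
  else ⌊(δ : ℝ) ^ 2 / (α - ⌊α⌋₊)⌋₊ + 1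

/-!
Write `ℓᵢ = νᵢ + a - 1 - i` for a diagram `ν` with at most `a` rows. Frobenius' expression
`F(ν) = n! ∏_{i<j} (ℓᵢ - ℓⱼ) / ∏ ℓᵢ!` satisfies the branching rule `F(ν) = ∑ F(ν - c)` over the
removable corners `c` of `ν`: after cancelling, this is the identity
`∑ᵣ ℓᵣ ∏_{j≠r} (ℓᵣ - 1 - ℓⱼ)/(ℓᵣ - ℓⱼ) = n`, which is Lagrange interpolation at the nodes `ℓᵣ`.
Putting the entry `n` into a removable corner embeds the standard tableaux of `ν - c`, for
the different corners `c`, disjointly into those of `ν`, so `f^ν ≥ ∑ f^(ν - c)`, and by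
induction `F(ν) ≤ f^ν`. For the rectangle, `F(b^a) = (ab)! ∏_{k<a} k! / (b + k)!`, and
`(b + k)! = C(b + k, k) k! b! ≤ 2^(b + k) k! b!` with `∑_{k<a} (b + k) ≤ 2ab`.
-/

open Finset
open scoped Nat

namespace YoungDiagram

lemma rowLen_eq_of_forall_mem_iff {μ : YoungDiagram} {i m : ℕ}
    (h : ∀ j, (i, j) ∈ μ ↔ j < m) : μ.rowLen i = m := by
  have h1 := (h (μ.rowLen i)).symm.trans mem_iff_lt_rowLen
  have h2 := (h m).symm.trans mem_iff_lt_rowLen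
  omega

lemma colLen_mono {μ ν : YoungDiagram} (h : μ ≤ ν) (j : ℕ) : μ.colLen j ≤ ν.colLen j := by
  by_contra! hlt
  exact (mem_iff_lt_colLen.not.mpr (lt_irrefl _)) (h (mem_iff_lt_colLen.mpr hlt))

lemma card_eq_sum_rowLen {ν : YoungDiagram} {a : ℕ} (hcol : ν.colLen 0 ≤ a) :
    ν.card = ∑ i ∈ range a, ν.rowLen i := by
  have hcells : ν.cells = (range a).biUnion ν.row := by
    ext ⟨i, j⟩
    simp only [mem_biUnion, mem_range, mem_row_iff, mem_cells]
    refine ⟨fun h => ⟨i, ?_, h, rfl⟩, fun ⟨_, _, h, _⟩ => h⟩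
    have := mem_iff_lt_colLen.mp (ν.up_left_mem le_rfl (Nat.zero_le j) h)
    omega
  rw [YoungDiagram.card, hcells, card_biUnion]
  · exact sum_congr rfl fun i _ => (ν.rowLen_eq_card).symm
  · intro i _ i' _ hii'
    simp only [Function.onFun, disjoint_left, mem_row_iff]
    exact fun _ hx hx' => hii' (hx.2.symm.trans hx'.2)

end YoungDiagram

namespace IsSYT

variable {μ : YoungDiagram} {T : ℕ × ℕ → ℕ}

lemma le_card (hT : IsSYT μ T) (c : ℕ × ℕ) : T c ≤ μ.card := by
  by_cases hc : c ∈ μ.cells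
  · exact (mem_Icc.mp (hT.1 c hc)).2
  · simp [hT.2.1 c hc]

lemma update_maximal {ν : YoungDiagram} {c : ℕ × ℕ} (hT : IsSYT μ T) (hc : c ∈ ν)
    (hmax : ∀ x ∈ ν, c ≤ x → x = c) (hμ : μ.cells = ν.cells.erase c) :
    IsSYT ν (Function.update T c ν.card) := by
  obtain ⟨hIcc, hzero, hinj, hrow, hcol⟩ := hT
  set S := Function.update T c ν.card
  have hcard : μ.card + 1 = ν.card := by
    simp only [YoungDiagram.card, hμ, card_erase_add_one hc]
  have hmem : ∀ {x}, x ∈ μ ↔ x ∈ ν ∧ x ≠ c := by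
    intro x
    rw [← YoungDiagram.mem_cells, hμ, mem_erase, and_comm]; rfl
  have hSc : S c = ν.card := Function.update_self ..
  have hS : ∀ x ∈ μ, S x = T x ∧ 1 ≤ T x ∧ T x < ν.card := fun x hx =>
    have := mem_Icc.mp (hIcc x hx)
    ⟨Function.update_of_ne (hmem.1 hx).2 .., this.1, by omega⟩
  have hmono : ∀ x y, x ≤ y → x ≠ y → y ∈ ν → (y ∈ μ → T x < T y) → S x < S y := by
    intro x y hxy hne hy hTxy
    have hx : x ∈ μ :=
      hmem.2 ⟨ν.isLowerSet hxy hy, fun hxc => hne (hxc.trans (hmax y hy (hxc ▸ hxy)).symm)⟩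
    rcases eq_or_ne y c with rfl | hyc
    · rw [hSc, (hS x hx).1]; exact (hS x hx).2.2
    · rw [(hS x hx).1, (hS y (hmem.2 ⟨hy, hyc⟩)).1]; exact hTxy (hmem.2 ⟨hy, hyc⟩)
  have heq_c : ∀ z ∈ ν, S z = ν.card → z = c := fun z hz h => by
    by_contra hzc
    have := hS z (hmem.2 ⟨hz, hzc⟩)
    omega
  refine ⟨fun x hx => ?_, fun x hx => ?_, fun x hx y hy hxy => ?_, fun i j1 j2 hj hy => ?_,
    fun i1 i2 j hi hy => ?_⟩
  · rcases eq_or_ne x c with rfl | hxc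
    · rw [hSc, mem_Icc]; omega
    · have := hS x (hmem.2 ⟨hx, hxc⟩)
      rw [this.1, mem_Icc]; omega
  · rw [show S x = T x from Function.update_of_ne (by rintro rfl; exact hx hc) ..]
    exact hzero x (fun h => hx (hmem.1 h).1)
  · rcases eq_or_ne x c with rfl | hxc
    · exact (heq_c y hy (hxy ▸ hSc)).symm
    rcases eq_or_ne y c with rfl | hyc
    · exact heq_c x hx (hxy.trans hSc)
    have hxμ := hmem.2 ⟨hx, hxc⟩
    have hyμ := hmem.2 ⟨hy, hyc⟩
    rw [(hS x hxμ).1, (hS y hyμ).1] at hxy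
    exact hinj hxμ hyμ hxy
  · exact hmono _ _ ⟨le_rfl, hj.le⟩ (by simp [hj.ne]) hy (hrow i j1 j2 hj)
  · exact hmono _ _ ⟨hi.le, le_rfl⟩ (by simp [hi.ne]) hy (hcol i1 i2 j hi)

end IsSYT

instance (μ : YoungDiagram) : Finite { T : ℕ × ℕ → ℕ // IsSYT μ T } := by
  refine Finite.of_injective
    (fun T (c : μ.cells) => (⟨T.1 c, Nat.lt_succ_of_le (T.2.le_card c)⟩ : Fin (μ.card + 1))) ?_
  intro T S h
  ext c
  by_cases hc : c ∈ μ.cells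
  · exact congrArg Fin.val (congrFun h ⟨c, hc⟩)
  · rw [T.2.2.1 c hc, S.2.2.1 c hc]

lemma one_le_fdeg_of_cells_eq_empty {μ : YoungDiagram} (h : μ.cells = ∅) : 1 ≤ fdeg μ := by
  have hμ : ∀ c, c ∉ μ := fun c hc => by simp [← YoungDiagram.mem_cells, h] at hc
  have hT : IsSYT μ (fun _ => 0) :=
    ⟨fun c hc => (hμ c hc).elim, fun _ _ => rfl, fun x hx => (hμ x hx).elim,
      fun _ _ _ _ hc => (hμ _ hc).elim, fun _ _ _ _ hc => (hμ _ hc).elim⟩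
  exact Nat.one_le_iff_ne_zero.mpr (Nat.card_ne_zero.mpr ⟨⟨⟨_, hT⟩⟩, inferInstance⟩)

/-- The last cell `(r, ν.rowLen r - 1)` of row `r` is a removable corner of `ν`. -/
def Removable (ν : YoungDiagram) (r : ℕ) : Prop := ν.rowLen (r + 1) < ν.rowLen r

instance (ν : YoungDiagram) (r : ℕ) : Decidable (Removable ν r) :=
  inferInstanceAs (Decidable (_ < _))

namespace Removable

variable {ν : YoungDiagram} {r : ℕ}

lemma corner_mem (h : Removable ν r) : (r, ν.rowLen r - 1) ∈ ν :=
  YoungDiagram.mem_iff_lt_rowLen.mpr (by unfold Removable at h; omega)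

lemma eq_corner_of_le (h : Removable ν r) {x : ℕ × ℕ} (hx : x ∈ ν)
    (hle : (r, ν.rowLen r - 1) ≤ x) : x = (r, ν.rowLen r - 1) := by
  obtain ⟨i, j⟩ := x
  obtain ⟨hri : r ≤ i, hj : ν.rowLen r - 1 ≤ j⟩ := hle
  have hji := YoungDiagram.mem_iff_lt_rowLen.mp hx
  have := ν.rowLen_anti r i hri
  obtain rfl : i = r := by
    by_contra hne
    have := ν.rowLen_anti (r + 1) i (by omega)
    unfold Removable at h
    omega
  simp only [Prod.mk.injEq, true_and]
  omega

lemma isLowerSet_erase (h : Removable ν r) :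
    IsLowerSet (↑(ν.cells.erase (r, ν.rowLen r - 1)) : Set (ℕ × ℕ)) := by
  intro x y hyx hx
  simp only [coe_erase, Set.mem_sdiff, Finset.mem_coe, Set.mem_singleton_iff] at hx ⊢
  refine ⟨ν.isLowerSet hyx hx.1, ?_⟩
  rintro rfl
  exact hx.2 (h.eq_corner_of_le hx.1 hyx)

end Removable

def eraseCorner (ν : YoungDiagram) (r : ℕ) : YoungDiagram :=
  if h : Removable ν r then ⟨ν.cells.erase (r, ν.rowLen r - 1), h.isLowerSet_erase⟩ else ν

section eraseCorner

variable {ν : YoungDiagram} {r : ℕ}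

lemma cells_eraseCorner (h : Removable ν r) :
    (eraseCorner ν r).cells = ν.cells.erase (r, ν.rowLen r - 1) := by
  rw [eraseCorner, dif_pos h]

lemma mem_eraseCorner (h : Removable ν r) {x : ℕ × ℕ} :
    x ∈ eraseCorner ν r ↔ x ∈ ν ∧ x ≠ (r, ν.rowLen r - 1) := by
  rw [← YoungDiagram.mem_cells, cells_eraseCorner h, Finset.mem_erase, and_comm]; rfl

lemma card_eraseCorner_add_one (h : Removable ν r) : (eraseCorner ν r).card + 1 = ν.card := by
  simp only [YoungDiagram.card, cells_eraseCorner h, card_erase_add_one h.corner_mem]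

lemma eraseCorner_le (ν : YoungDiagram) (r : ℕ) : eraseCorner ν r ≤ ν := by
  unfold eraseCorner
  split_ifs with h
  · intro x hx; exact ((mem_eraseCorner h).mp (by rwa [eraseCorner, dif_pos h])).1
  · exact le_rfl

lemma rowLen_eraseCorner (h : Removable ν r) :
    (eraseCorner ν r).rowLen = Function.update ν.rowLen r (ν.rowLen r - 1) := by
  funext i
  refine YoungDiagram.rowLen_eq_of_forall_mem_iff fun j => ?_
  rw [mem_eraseCorner h, YoungDiagram.mem_iff_lt_rowLen]
  rcases eq_or_ne i r with rfl | hi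
  · have := h.corner_mem
    rw [YoungDiagram.mem_iff_lt_rowLen] at this
    simp only [Function.update_self, ne_eq, Prod.mk.injEq, true_and]
    omega
  · simp [hi]

end eraseCorner

theorem sum_fdeg_eraseCorner_le (ν : YoungDiagram) (s : Finset ℕ) :
    ∑ r ∈ s with Removable ν r, fdeg (eraseCorner ν r) ≤ fdeg ν := by
  set R := s.filter (Removable ν)
  have hR : ∀ r : R, Removable ν r := fun r => (mem_filter.mp r.2).2
  let F : (Σ r : R, { T // IsSYT (eraseCorner ν r) T }) → { T // IsSYT ν T } :=
    fun ⟨r, T⟩ => ⟨Function.update T.1 (r, ν.rowLen r - 1) ν.card,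
      T.2.update_maximal (hR r).corner_mem (fun _ => (hR r).eq_corner_of_le)
        (cells_eraseCorner (hR r))⟩
  have hF : Function.Injective F := by
    rintro ⟨r, T, hT⟩ ⟨r', T', hT'⟩ hFF
    have hS := congrArg Subtype.val hFF
    simp only [F] at hS
    obtain rfl : r = r' := by
      have hcorner := (F ⟨r, T, hT⟩).2.2.2.1 (hR r).corner_mem (hR r').corner_mem
        (by simp only [F, hS, Function.update_self])
      exact Subtype.ext (congrArg Prod.fst hcorner)
    have hrecover : ∀ U, IsSYT (eraseCorner ν r) U →
        U = Function.update (Function.update U (r, ν.rowLen r - 1) ν.card)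
          (r, ν.rowLen r - 1) 0 := by
      intro U hU
      rw [Function.update_idem, eq_comm, Function.update_eq_self_iff]
      exact (hU.2.1 _ fun h => ((mem_eraseCorner (hR r)).mp h).2 rfl).symm
    congr
    rw [hrecover T hT, hrecover T' hT', hS]
  calc ∑ r ∈ R, fdeg (eraseCorner ν r)
      = Nat.card (Σ r : R, { T // IsSYT (eraseCorner ν r) T }) := by
        rw [Nat.card_sigma]; exact (Finset.sum_coe_sort R _).symm
    _ ≤ fdeg ν := Nat.card_le_card_of_injective F hF

open Polynomial Lagrange

section Nodal

variable {R : Type*} [CommRing R] (w : ℕ → R)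

lemma nodal_range_succ (k : ℕ) :
    nodal (range (k + 1)) w = nodal (range k) w * (X - C (w k)) := by
  simp only [nodal, prod_range_succ]

lemma coeff_nodal_range_self [Nontrivial R] (k : ℕ) : (nodal (range k) w).coeff k = 1 := by
  simpa [natDegree_nodal] using (nodal_monic (s := range k) (v := w)).coeff_natDegree

lemma coeff_nodal_range_succ (k : ℕ) :
    (nodal (range (k + 1)) w).coeff k = -∑ i ∈ range (k + 1), w i := by
  induction k with
  | zero => simp [nodal]
  | succ k ih =>
    nontriviality R
    rw [nodal_range_succ, coeff_mul_X_sub_C, ih, coeff_nodal_range_self, sum_range_succ w (k + 1)]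
    ring

lemma two_mul_coeff_nodal_range_add_two (k : ℕ) :
    2 * (nodal (range (k + 2)) w).coeff k =
      (∑ i ∈ range (k + 2), w i) ^ 2 - ∑ i ∈ range (k + 2), w i ^ 2 := by
  induction k with
  | zero =>
    simp only [nodal, zero_add, prod_range_succ, range_one, prod_singleton, mul_coeff_zero,
      coeff_sub, coeff_X_zero, coeff_C_zero, sum_range_succ, sum_singleton]
    ring
  | succ k ih =>
    rw [nodal_range_succ, coeff_mul_X_sub_C, mul_sub, ih, coeff_nodal_range_succ,
      sum_range_succ _ (k + 2), sum_range_succ (fun i => w i ^ 2) (k + 2)]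
    ring

lemma coeff_X_mul_sub_X_sub_C_mul (P Q : R[X]) (m : R) (n : ℕ) :
    (X * Q - (X - C m) * P).coeff (n + 1) = Q.coeff n - P.coeff n + m * P.coeff (n + 1) := by
  simp only [coeff_sub, coeff_X_mul, sub_mul, coeff_C_mul]
  ring

lemma degree_X_mul_nodal_add_one_sub_lt [Nontrivial R] (k : ℕ) :
    (X * nodal (range (k + 2)) (fun j => w j + 1) -
      (X - C ((k + 2 : ℕ) : R)) * nodal (range (k + 2)) w).degree < ((k + 2 : ℕ) : WithBot ℕ) := by
  have hzero : ∀ v : ℕ → R, ∀ i, k + 2 < i → (nodal (range (k + 2)) v).coeff i = 0 :=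
    fun v i hi => coeff_eq_zero_of_natDegree_lt (by rwa [natDegree_nodal, card_range])
  rw [degree_lt_iff_coeff_zero]
  intro m hm
  obtain ⟨n, rfl⟩ : ∃ n, m = n + 1 := ⟨m - 1, by omega⟩
  rw [coeff_X_mul_sub_X_sub_C_mul]
  rcases (show n = k + 1 ∨ n = k + 2 ∨ k + 2 < n by omega) with rfl | rfl | hn
  · rw [coeff_nodal_range_succ, coeff_nodal_range_succ, coeff_nodal_range_self, sum_add_distrib,
      sum_const, card_range, nsmul_one]
    push_cast; ring
  · rw [coeff_nodal_range_self, coeff_nodal_range_self, hzero w _ (by omega)]; ring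
  · rw [hzero _ n hn, hzero _ n hn, hzero _ (n + 1) (by omega)]; ring

end Nodal

lemma coeff_X_mul_nodal_add_one_sub {K : Type*} [Field K] [CharZero K] (ℓ : ℕ → K) (k : ℕ) :
    (X * nodal (range (k + 2)) (fun j => ℓ j + 1) -
      (X - C ((k + 2 : ℕ) : K)) * nodal (range (k + 2)) ℓ).coeff (k + 1) =
      ((k + 2).choose 2 : ℕ) - ∑ r ∈ range (k + 2), ℓ r := by
  have hQ2 := two_mul_coeff_nodal_range_add_two (fun j => ℓ j + 1) k
  have hP2 := two_mul_coeff_nodal_range_add_two ℓ k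
  simp only [sum_add_distrib, add_sq, sum_const, card_range, nsmul_eq_mul, mul_one, one_pow,
    ← mul_sum] at hQ2
  rw [coeff_X_mul_sub_X_sub_C_mul, coeff_nodal_range_succ, Nat.cast_choose_two]
  linear_combination (1 / 2 : K) * hQ2 - (1 / 2 : K) * hP2

/-- `D = X ∏ⱼ (X - ℓⱼ - 1) - (X - a) ∏ⱼ (X - ℓⱼ)` has degree `< a` and
`D(ℓᵣ) = -ℓᵣ ∏_{j≠r} (ℓᵣ - 1 - ℓⱼ)`, so both sides are minus the coefficient of `X ^ (a - 1)`
of `D`: the left one by Lagrange interpolation at the nodes `ℓᵣ`, the right one by Vieta. -/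
theorem sum_mul_prod_sub_one_div_sub {K : Type*} [Field K] [CharZero K] (a : ℕ) (ℓ : ℕ → K)
    (hℓ : Set.InjOn ℓ (range a)) :
    ∑ r ∈ range a, ℓ r * ∏ j ∈ (range a).erase r, (ℓ r - 1 - ℓ j) / (ℓ r - ℓ j) =
      ∑ r ∈ range a, ℓ r - a.choose 2 := by
  obtain _ | _ | k := a
  · simp
  · simp
  rw [show k + 1 + 1 = k + 2 from rfl] at hℓ ⊢
  have heval : ∀ r ∈ range (k + 2),
      (X * nodal (range (k + 2)) (fun j => ℓ j + 1) -
        (X - C ((k + 2 : ℕ) : K)) * nodal (range (k + 2)) ℓ).eval (ℓ r) /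
          ∏ j ∈ (range (k + 2)).erase r, (ℓ r - ℓ j) =
        -(ℓ r * ∏ j ∈ (range (k + 2)).erase r, (ℓ r - 1 - ℓ j) / (ℓ r - ℓ j)) := by
    intro r hr
    simp only [eval_sub, eval_mul, eval_X, eval_C, eval_nodal_at_node hr, eval_nodal,
      ← mul_prod_erase _ _ hr, sub_add_eq_sub_sub_swap, prod_div_distrib]
    ring
  have htop := coeff_eq_sum hℓ
    (by rw [card_range]; exact degree_X_mul_nodal_add_one_sub_lt ℓ k)
  rw [card_range, show k + 2 - 1 = k + 1 from rfl, coeff_X_mul_nodal_add_one_sub,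
    sum_congr rfl heval, sum_neg_distrib] at htop
  linear_combination htop

section Vandermonde

variable {R : Type*} [CommRing R]

def vandermondeProd (a : ℕ) (f : ℕ → R) : R :=
  ∏ j ∈ range a, ∏ i ∈ range j, (f i - f j)

lemma vandermondeProd_succ (a : ℕ) (f : ℕ → R) :
    vandermondeProd (a + 1) f = vandermondeProd a f * ∏ i ∈ range a, (f i - f a) :=
  prod_range_succ _ a

lemma vandermondeProd_congr {a : ℕ} {f g : ℕ → R} (h : ∀ i < a, f i = g i) :
    vandermondeProd a f = vandermondeProd a g :=
  prod_congr rfl fun j hj => prod_congr rfl fun i hi => by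
    rw [h i ((mem_range.mp hi).trans (mem_range.mp hj)), h j (mem_range.mp hj)]

theorem vandermondeProd_update_sub_one {a r : ℕ} (hr : r < a) (f : ℕ → R) :
    vandermondeProd a (Function.update f r (f r - 1)) * ∏ j ∈ (range a).erase r, (f r - f j) =
      vandermondeProd a f * ∏ j ∈ (range a).erase r, (f r - 1 - f j) := by
  set f' := Function.update f r (f r - 1)
  have hfr : f' r = f r - 1 := Function.update_self ..
  have hf' : ∀ i ≠ r, f' i = f i := fun i hi => Function.update_of_ne hi ..
  induction a with
  | zero => simp at hr
  | succ a ih =>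
    rw [vandermondeProd_succ, vandermondeProd_succ]
    rcases (Nat.lt_succ_iff_lt_or_eq.mp hr) with hr | rfl
    · rw [range_add_one, erase_insert_of_ne (by omega), prod_insert (by simp), prod_insert (by simp),
        ← mul_prod_erase _ _ (mem_range.mpr hr), ← mul_prod_erase (range a) (fun i => f i - f a)
          (mem_range.mpr hr), hf' a (by omega), hfr,
        prod_congr rfl fun i hi => by rw [hf' i (ne_of_mem_erase hi)]]
      linear_combination (f r - f a) * (f r - 1 - f a) *
        (∏ x ∈ (range a).erase r, (f x - f a)) * ih hr
    · rw [range_add_one, erase_insert (by simp), vandermondeProd_congr fun i hi => hf' i hi.ne,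
        hfr, prod_congr rfl fun i hi => by rw [hf' i (mem_range.mp hi).ne],
        mul_assoc, mul_assoc, ← prod_mul_distrib, ← prod_mul_distrib]
      congr 1
      exact prod_congr rfl fun i _ => by ring

lemma vandermondeProd_staircase (a K : ℕ) :
    vandermondeProd a (fun i => ((K + (a - 1 - i) : ℕ) : ℝ)) = ∏ j ∈ range a, (j ! : ℝ) := by
  refine prod_congr rfl fun j hj => ?_
  rw [← Nat.descFactorial_self, Nat.descFactorial_eq_prod_range, Nat.cast_prod]
  refine prod_congr rfl fun i hi => ?_
  have := mem_range.mp hj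
  have := mem_range.mp hi
  dsimp only
  rw [show K + (a - 1 - i) = K + (a - 1 - j) + (j - i) by omega, Nat.cast_add,
    Nat.cast_sub this.le]
  ring

end Vandermonde

/-- The hook length of the cell `(i, 0)` when `ν` has exactly `a` rows. -/
def shiftedRowLen (a : ℕ) (ν : YoungDiagram) (i : ℕ) : ℕ := ν.rowLen i + (a - 1 - i)

/-- Frobenius' formula for `f^ν`, valid when `ν` has at most `a` rows. -/
noncomputable def frobeniusFormula (a : ℕ) (ν : YoungDiagram) : ℝ :=
  ν.card ! * vandermondeProd a (fun i => (shiftedRowLen a ν i : ℝ)) /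
    ∏ i ∈ range a, ((shiftedRowLen a ν i)! : ℝ)

section Frobenius

variable {a : ℕ} {ν : YoungDiagram}

lemma shiftedRowLen_lt {i j : ℕ} (hij : i < j) (hj : j < a) :
    shiftedRowLen a ν j < shiftedRowLen a ν i := by
  have := ν.rowLen_anti i j hij.le
  unfold shiftedRowLen
  omega

lemma injOn_shiftedRowLen : Set.InjOn (fun i => (shiftedRowLen a ν i : ℝ)) (range a) := by
  intro i hi j hj hij
  have hij : shiftedRowLen a ν i = shiftedRowLen a ν j := Nat.cast_injective hij
  simp only [coe_range, Set.mem_Iio] at hi hj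
  by_contra hne
  rcases Nat.lt_or_gt_of_ne hne with h | h
  · exact (shiftedRowLen_lt h hj).ne' hij
  · exact (shiftedRowLen_lt h hi).ne hij

lemma sum_shiftedRowLen (hcol : ν.colLen 0 ≤ a) :
    ∑ i ∈ range a, shiftedRowLen a ν i = ν.card + a.choose 2 := by
  simp only [shiftedRowLen]
  rw [sum_add_distrib, ← YoungDiagram.card_eq_sum_rowLen hcol,
    sum_range_reflect (fun i => i) a, sum_range_id, Nat.choose_two_right]

lemma shiftedRowLen_eraseCorner {r : ℕ} (h : Removable ν r) :
    shiftedRowLen a (eraseCorner ν r) =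
      Function.update (shiftedRowLen a ν) r (shiftedRowLen a ν r - 1) := by
  funext i
  have := h.corner_mem
  rw [YoungDiagram.mem_iff_lt_rowLen] at this
  rcases eq_or_ne i r with rfl | hi
  · simp only [shiftedRowLen, rowLen_eraseCorner h, Function.update_self]; omega
  · simp only [shiftedRowLen, rowLen_eraseCorner h, Function.update_of_ne hi]

lemma shiftedRowLen_eq_zero_or_succ (hcol : ν.colLen 0 ≤ a) {r : ℕ} (hr : r < a)
    (h : ¬ Removable ν r) :
    shiftedRowLen a ν r = 0 ∨ r + 1 < a ∧ shiftedRowLen a ν r = shiftedRowLen a ν (r + 1) + 1 := by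
  have hanti := ν.rowLen_anti r (r + 1) r.le_succ
  unfold Removable at h
  unfold shiftedRowLen
  by_cases hlast : r + 1 < a
  · omega
  · have : ν.rowLen r = 0 := by
      by_contra h0
      have := YoungDiagram.mem_iff_lt_colLen.mp
        (YoungDiagram.mem_iff_lt_rowLen.mpr (show 0 < ν.rowLen (r + 1) by omega))
      omega
    omega

lemma frobeniusFormula_eraseCorner_mul_card {r : ℕ} (hr : r < a) (h : Removable ν r) :
    frobeniusFormula a (eraseCorner ν r) * ν.card =
      frobeniusFormula a ν * ((shiftedRowLen a ν r : ℝ) * ∏ j ∈ (range a).erase r,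
        ((shiftedRowLen a ν r : ℝ) - 1 - shiftedRowLen a ν j) /
          ((shiftedRowLen a ν r : ℝ) - shiftedRowLen a ν j)) := by
  set ℓ := shiftedRowLen a ν
  have hℓr : 1 ≤ ℓ r := by
    have := h.corner_mem
    rw [YoungDiagram.mem_iff_lt_rowLen] at this
    simp only [ℓ, shiftedRowLen]; omega
  have hcast : (fun i => (shiftedRowLen a (eraseCorner ν r) i : ℝ)) =
      Function.update (fun i => (ℓ i : ℝ)) r (ℓ r - 1) := by
    rw [shiftedRowLen_eraseCorner h, ← Function.comp_def, Function.comp_update, Nat.cast_sub hℓr,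
      Nat.cast_one]
    rfl
  have hfact : (∏ i ∈ range a, ((shiftedRowLen a (eraseCorner ν r) i)! : ℝ)) * ℓ r =
      ∏ i ∈ range a, ((ℓ i)! : ℝ) := by
    rw [shiftedRowLen_eraseCorner h, ← mul_prod_erase _ _ (mem_range.mpr hr),
      ← mul_prod_erase (range a) (fun i => ((ℓ i)! : ℝ)) (mem_range.mpr hr), Function.update_self,
      prod_congr rfl fun i hi => by rw [Function.update_of_ne (ne_of_mem_erase hi)],
      ← Nat.mul_factorial_pred (by omega : ℓ r ≠ 0)]
    push_cast
    ring
  have hcard : ((eraseCorner ν r).card ! : ℝ) * ν.card = ν.card ! := by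
    rw [← card_eraseCorner_add_one h]
    push_cast [Nat.factorial_succ]
    ring
  have hden : ∏ j ∈ (range a).erase r, ((ℓ r : ℝ) - ℓ j) ≠ 0 :=
    prod_ne_zero_iff.mpr fun j hj => sub_ne_zero.mpr fun heq =>
      (ne_of_mem_erase hj) (injOn_shiftedRowLen (mem_of_mem_erase hj) (mem_range.mpr hr) heq.symm)
  have hℓ0 : (ℓ r : ℝ) ≠ 0 := Nat.cast_ne_zero.mpr (by omega)
  have hfac : ∏ i ∈ range a, ((shiftedRowLen a (eraseCorner ν r) i)! : ℝ) ≠ 0 :=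
    prod_ne_zero_iff.mpr fun i _ => by positivity
  rw [frobeniusFormula, frobeniusFormula, hcast, ← hfact, ← hcard, prod_div_distrib]
  field_simp
  linear_combination (ν.card : ℝ) * vandermondeProd_update_sub_one hr (fun i => (ℓ i : ℝ))

theorem frobeniusFormula_eq_sum (hcol : ν.colLen 0 ≤ a) (hpos : 0 < ν.card) :
    frobeniusFormula a ν = ∑ r ∈ range a with Removable ν r, frobeniusFormula a (eraseCorner ν r) := by
  set f := fun i => (shiftedRowLen a ν i : ℝ)
  have hsum : ∑ r ∈ range a, f r * ∏ j ∈ (range a).erase r, (f r - 1 - f j) / (f r - f j) =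
      ν.card := by
    rw [sum_mul_prod_sub_one_div_sub a f injOn_shiftedRowLen, ← Nat.cast_sum,
      sum_shiftedRowLen hcol]
    push_cast
    ring
  have hterm : ∀ r ∈ range a, ¬ Removable ν r →
      f r * ∏ j ∈ (range a).erase r, (f r - 1 - f j) / (f r - f j) = 0 := by
    intro r hr h
    rcases shiftedRowLen_eq_zero_or_succ hcol (mem_range.mp hr) h with h0 | ⟨hlt, hsucc⟩
    · simp [f, h0]
    · refine mul_eq_zero_of_right _ (prod_eq_zero (i := r + 1) (by simp [hlt]) ?_)
      simp [f, hsucc]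
  refine mul_right_cancel₀ (Nat.cast_ne_zero.mpr hpos.ne' : (ν.card : ℝ) ≠ 0) ?_
  calc frobeniusFormula a ν * ν.card
      = ∑ r ∈ range a, frobeniusFormula a ν *
          (f r * ∏ j ∈ (range a).erase r, (f r - 1 - f j) / (f r - f j)) := by
        rw [← mul_sum, hsum]
    _ = ∑ r ∈ range a with Removable ν r, frobeniusFormula a (eraseCorner ν r) * ν.card := by
        rw [sum_filter]
        refine sum_congr rfl fun r hr => ?_
        split_ifs with h
        · exact (frobeniusFormula_eraseCorner_mul_card (mem_range.mp hr) h).symm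
        · rw [hterm r hr h, mul_zero]
    _ = _ := (sum_mul ..).symm

lemma frobeniusFormula_of_rowLen_eq {K : ℕ} (hflat : ∀ i < a, ν.rowLen i = K) :
    frobeniusFormula a ν =
      ν.card ! * (∏ j ∈ range a, (j ! : ℝ)) / ∏ k ∈ range a, ((K + k)! : ℝ) := by
  have hℓ : ∀ i < a, shiftedRowLen a ν i = K + (a - 1 - i) := fun i hi => by
    rw [shiftedRowLen, hflat i hi]
  have hden : ∏ i ∈ range a, ((shiftedRowLen a ν i)! : ℝ) = ∏ i ∈ range a, ((K + (a - 1 - i))! : ℝ) :=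
    prod_congr rfl fun i hi => by rw [hℓ i (mem_range.mp hi)]
  rw [frobeniusFormula, vandermondeProd_congr (fun i hi => by rw [hℓ i hi]),
    vandermondeProd_staircase, hden, prod_range_reflect (fun k => ((K + k)! : ℝ))]

theorem frobeniusFormula_le_fdeg (hcol : ν.colLen 0 ≤ a) : frobeniusFormula a ν ≤ fdeg ν := by
  induction hn : ν.card using Nat.strong_induction_on generalizing ν with
  | _ n ih =>
  rcases Nat.eq_zero_or_pos n with rfl | hpos
  · have hempty : ν.cells = ∅ := card_eq_zero.mp hn
    have hflat : ∀ i < a, ν.rowLen i = 0 := fun i _ =>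
      YoungDiagram.rowLen_eq_of_forall_mem_iff fun j => by simp [← YoungDiagram.mem_cells, hempty]
    have hprod : ∏ j ∈ range a, (j ! : ℝ) ≠ 0 := prod_ne_zero_iff.mpr fun j _ => by positivity
    rw [frobeniusFormula_of_rowLen_eq hflat, hn, Nat.factorial_zero, Nat.cast_one, one_mul]
    simp only [zero_add]
    rw [div_self hprod]
    exact_mod_cast one_le_fdeg_of_cells_eq_empty hempty
  · calc frobeniusFormula a ν
        = ∑ r ∈ range a with Removable ν r, frobeniusFormula a (eraseCorner ν r) :=
          frobeniusFormula_eq_sum hcol (hn ▸ hpos)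
      _ ≤ ∑ r ∈ range a with Removable ν r, (fdeg (eraseCorner ν r) : ℝ) := by
          refine sum_le_sum fun r hr => ih _ ?_ ?_ rfl
          · have := card_eraseCorner_add_one (mem_filter.mp hr).2; omega
          · exact (YoungDiagram.colLen_mono (eraseCorner_le ν r) 0).trans hcol
      _ ≤ fdeg ν := by exact_mod_cast sum_fdeg_eraseCorner_le ν (range a)

end Frobenius

section Rectangle

variable {a b : ℕ}

lemma mem_rect {x : ℕ × ℕ} : x ∈ rect a b ↔ x.1 < a ∧ x.2 < b := by
  rw [← YoungDiagram.mem_cells, rect, YoungDiagram.cells, mem_product, mem_range, mem_range]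

lemma rowLen_rect {i : ℕ} (hi : i < a) : (rect a b).rowLen i = b :=
  YoungDiagram.rowLen_eq_of_forall_mem_iff fun j => by simp [mem_rect, hi]

lemma colLen_rect_le : (rect a b).colLen 0 ≤ a :=
  not_lt.mp fun h => (lt_irrefl a) (mem_rect.mp (YoungDiagram.mem_iff_lt_colLen.mpr h)).1

lemma card_rect : (rect a b).card = a * b := by
  rw [YoungDiagram.card, rect, card_product, card_range, card_range]

end Rectangle

lemma prod_factorial_add_le {a b : ℕ} (hab : a ≤ b) :
    ∏ k ∈ range a, (b + k)! ≤ 2 ^ (2 * (a * b)) * ((∏ k ∈ range a, k !) * b ! ^ a) := by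
  have hexp : ∑ k ∈ range a, (b + k) ≤ 2 * (a * b) := by
    have := sum_range_id_mul_two a
    rw [sum_add_distrib, sum_const, card_range, smul_eq_mul]
    nlinarith [Nat.sub_le a 1]
  calc ∏ k ∈ range a, (b + k)!
      = ∏ k ∈ range a, (b + k).choose k * (k ! * b !) :=
        prod_congr rfl fun k _ => by rw [← Nat.add_choose_mul_factorial_mul_factorial b k]; ring
    _ = (∏ k ∈ range a, (b + k).choose k) * ((∏ k ∈ range a, k !) * b ! ^ a) := by
        rw [prod_mul_distrib, prod_mul_distrib, prod_const, card_range]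
    _ ≤ (∏ k ∈ range a, 2 ^ (b + k)) * ((∏ k ∈ range a, k !) * b ! ^ a) := by
        gcongr with k
        exact Nat.choose_le_two_pow _ _
    _ ≤ 2 ^ (2 * (a * b)) * ((∏ k ∈ range a, k !) * b ! ^ a) := by
        rw [prod_pow_eq_pow_sum]
        gcongr
        norm_num

theorem stmt5_general (a b : ℕ) (hab : a ≤ b) :
    ((a * b).factorial : ℝ) / (b.factorial : ℝ) ^ a / 2 ^ (2 * (a * b))
      ≤ (fdeg (rect a b) : ℝ) := by
  have hfrob := frobeniusFormula_le_fdeg (colLen_rect_le (a := a) (b := b))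
  rw [frobeniusFormula_of_rowLen_eq fun i hi => rowLen_rect hi, card_rect] at hfrob
  refine le_trans ?_ hfrob
  have hprod : (∏ k ∈ range a, ((b + k)! : ℝ)) ≤
      2 ^ (2 * (a * b)) * ((∏ k ∈ range a, (k ! : ℝ)) * (b ! : ℝ) ^ a) := by
    exact_mod_cast prod_factorial_add_le hab
  rw [div_div, div_le_div_iff₀ (by positivity) (by positivity)]
  calc ((a * b)! : ℝ) * ∏ k ∈ range a, ((b + k)! : ℝ)
      ≤ (a * b)! * (2 ^ (2 * (a * b)) * ((∏ k ∈ range a, (k ! : ℝ)) * (b ! : ℝ) ^ a)) := by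
        gcongr
    _ = _ := by ring

/-- for `1 ≤ a ≤ b` and `n = ab`, the rectangular partition
`μ = (b^a)` satisfies `f^μ ≥ (n!/(b!)^a) · 2^{−2n}`. -/
theorem stmt5 (a b : ℕ) (ha : 1 ≤ a) (hab : a ≤ b) :
    ((a * b).factorial : ℝ) / (b.factorial : ℝ) ^ a / 2 ^ (2 * (a * b))
      ≤ (fdeg (rect a b) : ℝ) :=
  stmt5_general a b hab
end

section
/- Let {a_s}_{s≥1} and {b_s}_{s≥1} be two sequences of positive integers with a_s → ∞ and b_s → ∞ as s → ∞, and for each s let μ(s) = (b_s^{a_s}) be the rectangular partition of a_s·b_s with a_s rows of length b_s. Then for every real β > 0 there exists s_0 such that for every s ≥ s_0, f^{μ(s)} > β^{a_s b_s}. -/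
/-!
Filling the antidiagonals `i + j = d` of a Young diagram one after another, in an arbitrary
order within each antidiagonal, yields a standard Young tableau, because a cell to the right of
or below another one lies on a later antidiagonal. Hence `f^μ ≥ ∏_d ℓ_d!`, where `ℓ_d` are the
antidiagonal lengths. For the `a × b` rectangle these `a + b` lengths sum to `ab`, and the bound
`ℓ! ≥ (K²)^(ℓ - K²)` gives `∏_d ℓ_d! ≥ K^(2(ab - K²(a + b))) ≥ K^(ab)` once `a, b ≥ 4K²`.
-/

open Finset
open scoped Nat

namespace YoungDiagram

variable (μ : YoungDiagram)

def antidiagCells (d : ℕ) : Finset (ℕ × ℕ) := {c ∈ μ.cells | c.1 + c.2 = d}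

def cellsBefore (d : ℕ) : Finset (ℕ × ℕ) := {c ∈ μ.cells | c.1 + c.2 < d}

variable {μ}

theorem mem_antidiagCells {d : ℕ} {c : ℕ × ℕ} :
    c ∈ μ.antidiagCells d ↔ c ∈ μ ∧ c.1 + c.2 = d :=
  mem_filter

theorem card_cellsBefore_succ (d : ℕ) :
    #(μ.cellsBefore (d + 1)) = #(μ.cellsBefore d) + #(μ.antidiagCells d) := by
  rw [cellsBefore, cellsBefore, antidiagCells, ← card_union_of_disjoint
    (disjoint_filter.2 fun _ _ h => h.ne), ← filter_or]
  simp only [Nat.lt_succ_iff_lt_or_eq]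

theorem card_cellsBefore_mono {d e : ℕ} (h : d ≤ e) :
    #(μ.cellsBefore d) ≤ #(μ.cellsBefore e) :=
  card_le_card <| monotone_filter_right _ fun _ _ hc => hc.trans_le h

theorem card_cellsBefore_le (d : ℕ) : #(μ.cellsBefore d) ≤ μ.card :=
  card_le_card <| filter_subset _ _

open Equiv

variable (σ : (d : ℕ) → Perm (Fin #(μ.antidiagCells d)))

noncomputable def antidiagTableau (c : ℕ × ℕ) : ℕ :=
  if h : c ∈ μ then
    #(μ.cellsBefore (c.1 + c.2)) +
      (σ _ ((μ.antidiagCells _).equivFin ⟨c, mem_antidiagCells.2 ⟨h, rfl⟩⟩) : ℕ) + 1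
  else 0

theorem antidiagTableau_of_mem {d : ℕ} {c : ℕ × ℕ} (hc : c ∈ μ.antidiagCells d) :
    antidiagTableau σ c =
      #(μ.cellsBefore d) + (σ d ((μ.antidiagCells d).equivFin ⟨c, hc⟩) : ℕ) + 1 := by
  obtain ⟨hμ, rfl⟩ := mem_antidiagCells.1 hc
  exact dif_pos hμ

theorem antidiagTableau_mem_Ioc {c : ℕ × ℕ} (hc : c ∈ μ) :
    antidiagTableau σ c ∈
      Ioc #(μ.cellsBefore (c.1 + c.2)) #(μ.cellsBefore (c.1 + c.2 + 1)) := by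
  have hc' : c ∈ μ.antidiagCells (c.1 + c.2) := mem_antidiagCells.2 ⟨hc, rfl⟩
  have hσ := (σ _ ((μ.antidiagCells _).equivFin ⟨c, hc'⟩)).isLt
  rw [antidiagTableau_of_mem σ hc', card_cellsBefore_succ, mem_Ioc]
  omega

theorem antidiagTableau_lt {c c' : ℕ × ℕ} (hc : c ∈ μ) (hc' : c' ∈ μ)
    (h : c.1 + c.2 < c'.1 + c'.2) : antidiagTableau σ c < antidiagTableau σ c' :=
  calc antidiagTableau σ c ≤ #(μ.cellsBefore (c.1 + c.2 + 1)) :=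
        (mem_Ioc.1 (antidiagTableau_mem_Ioc σ hc)).2
    _ ≤ #(μ.cellsBefore (c'.1 + c'.2)) := card_cellsBefore_mono h
    _ < antidiagTableau σ c' := (mem_Ioc.1 (antidiagTableau_mem_Ioc σ hc')).1

theorem isSYT_antidiagTableau : IsSYT μ (antidiagTableau σ) := by
  refine ⟨fun c hc => ?_, fun c hc => dif_neg hc, ?_, fun i j1 j2 hj h => ?_,
    fun i1 i2 j hi h => ?_⟩
  · have hT := mem_Ioc.1 (antidiagTableau_mem_Ioc σ hc)
    have hle := card_cellsBefore_le (μ := μ) (c.1 + c.2 + 1)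
    rw [mem_Icc]
    omega
  · intro c hc c' hc' h
    have hd : c.1 + c.2 = c'.1 + c'.2 := by
      by_contra hne
      rcases Nat.lt_or_gt_of_ne hne with hlt | hlt
      · exact (antidiagTableau_lt σ hc hc' hlt).ne h
      · exact (antidiagTableau_lt σ hc' hc hlt).ne' h
    have hcd : c ∈ μ.antidiagCells (c.1 + c.2) := mem_antidiagCells.2 ⟨hc, rfl⟩
    have hcd' : c' ∈ μ.antidiagCells (c.1 + c.2) := mem_antidiagCells.2 ⟨hc', hd.symm⟩
    rw [antidiagTableau_of_mem σ hcd, antidiagTableau_of_mem σ hcd', add_left_inj,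
      add_right_inj, Fin.val_inj, (σ _).apply_eq_iff_eq, (equivFin _).apply_eq_iff_eq] at h
    exact congrArg Subtype.val h
  · exact antidiagTableau_lt σ (μ.up_left_mem le_rfl hj.le h) h (by simpa using hj)
  · exact antidiagTableau_lt σ (μ.up_left_mem hi.le le_rfl h) h (by simpa using hi)

theorem antidiagTableau_injective :
    Function.Injective (antidiagTableau : ((d : ℕ) → Perm (Fin #(μ.antidiagCells d))) → _) := by
  intro σ σ' h
  ext d r
  have hc := ((μ.antidiagCells d).equivFin.symm r).2
  simpa [antidiagTableau_of_mem _ hc] using congrFun h ((μ.antidiagCells d).equivFin.symm r)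

instance finite_isSYT : Finite {T : ℕ × ℕ → ℕ // IsSYT μ T} :=
  Finite.of_injective
    (fun T (c : μ.cells) =>
      (⟨T.1 c, Nat.lt_succ_of_le (mem_Icc.1 (T.2.1 c c.2)).2⟩ : Fin (μ.card + 1)))
    fun T T' h => Subtype.ext <| funext fun c => by
      by_cases hc : c ∈ μ.cells
      · exact congrArg Fin.val (congrFun h ⟨c, hc⟩)
      · rw [T.2.2.1 c hc, T'.2.2.1 c hc]

variable (μ) in
theorem prod_factorial_card_antidiagCells_le_fdeg (D : ℕ) :
    ∏ d ∈ range D, (#(μ.antidiagCells d))! ≤ fdeg μ := by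
  let extend (σ : (d : Fin D) → Perm (Fin #(μ.antidiagCells d))) (d : ℕ) :
      Perm (Fin #(μ.antidiagCells d)) :=
    if h : d < D then σ ⟨d, h⟩ else 1
  have extend_injective : Function.Injective extend := fun σ σ' h =>
    funext fun d => by simpa [extend, d.isLt] using congrFun h d
  calc ∏ d ∈ range D, (#(μ.antidiagCells d))!
      = Nat.card ((d : Fin D) → Perm (Fin #(μ.antidiagCells d))) := by
        rw [Nat.card_pi, ← Fin.prod_univ_eq_prod_range]
        simp [Fintype.card_perm]
    _ ≤ fdeg μ := Nat.card_le_card_of_injective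
        (fun σ => ⟨antidiagTableau (extend σ), isSYT_antidiagTableau _⟩)
        fun σ σ' h => extend_injective (antidiagTableau_injective (congrArg Subtype.val h))

end YoungDiagram

theorem pow_sub_le_factorial (M L : ℕ) : M ^ (L - M) ≤ L ! := by
  rcases le_total M L with h | h
  · exact (Nat.le_mul_of_pos_left _ M.factorial_pos).trans
      (Nat.factorial_mul_pow_sub_le_factorial h)
  · rw [Nat.sub_eq_zero_of_le h, pow_zero]
    exact L.factorial_pos

theorem pow_sum_le_prod_factorial {ι : Type*} (s : Finset ι) (L : ι → ℕ) {K : ℕ}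
    (hK : 0 < K) (h : 2 * K ^ 2 * #s ≤ ∑ i ∈ s, L i) :
    K ^ (∑ i ∈ s, L i) ≤ ∏ i ∈ s, (L i)! := by
  have htrunc : ∑ i ∈ s, L i ≤ ∑ i ∈ s, (L i - K ^ 2) + #s * K ^ 2 := by
    rw [← smul_eq_mul, ← sum_const, ← sum_add_distrib]
    exact sum_le_sum fun i _ => le_tsub_add
  calc K ^ (∑ i ∈ s, L i) ≤ K ^ (2 * ∑ i ∈ s, (L i - K ^ 2)) :=
        Nat.pow_le_pow_right hK (by linarith)
    _ = ∏ i ∈ s, (K ^ 2) ^ (L i - K ^ 2) := by rw [pow_mul, prod_pow_eq_pow_sum]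
    _ ≤ ∏ i ∈ s, (L i)! := prod_le_prod' fun i _ => pow_sub_le_factorial _ _

theorem sum_card_antidiagCells_rect (a b : ℕ) :
    ∑ d ∈ range (a + b), #((rect a b).antidiagCells d) = a * b := by
  have hcells : (rect a b).cells = range a ×ˢ range b := rfl
  have hcard : #(rect a b).cells = a * b := by simp [hcells]
  rw [← hcard]
  refine (card_eq_sum_card_fiberwise (f := fun c : ℕ × ℕ => c.1 + c.2) fun c hc => ?_).symm
  simp only [hcells, coe_product, Set.mem_prod, mem_coe, mem_range] at hc ⊢
  omega

theorem pow_le_fdeg_rect {K a b : ℕ} (hK : 0 < K) (ha : 4 * K ^ 2 ≤ a) (hb : 4 * K ^ 2 ≤ b) :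
    K ^ (a * b) ≤ fdeg (rect a b) := by
  rw [← sum_card_antidiagCells_rect]
  refine le_trans (pow_sum_le_prod_factorial _ _ hK ?_)
    ((rect a b).prod_factorial_card_antidiagCells_le_fdeg _)
  rw [sum_card_antidiagCells_rect, card_range]
  nlinarith

theorem stmt6_general (a b : ℕ → ℕ)
    (hta : Filter.Tendsto a Filter.atTop Filter.atTop)
    (htb : Filter.Tendsto b Filter.atTop Filter.atTop)
    (β : ℝ) (hβ : 0 < β) :
    ∃ s0 : ℕ, ∀ s ≥ s0, β ^ (a s * b s) < (fdeg (rect (a s) (b s)) : ℝ) := by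
  obtain ⟨K, hβK⟩ := exists_nat_gt β
  have hK : 0 < K := by exact_mod_cast hβ.trans hβK
  obtain ⟨s0, hs0⟩ := Filter.eventually_atTop.1
    ((hta.eventually_ge_atTop (4 * K ^ 2)).and (htb.eventually_ge_atTop (4 * K ^ 2)))
  refine ⟨s0, fun s hs => ?_⟩
  obtain ⟨ha, hb⟩ := hs0 s hs
  have hK2 : 0 < K ^ 2 := pow_pos hK 2
  have hab : a s * b s ≠ 0 := Nat.mul_ne_zero (by omega) (by omega)
  calc β ^ (a s * b s) < (K : ℝ) ^ (a s * b s) := pow_lt_pow_left₀ hβK hβ.le hab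
    _ ≤ fdeg (rect (a s) (b s)) := by exact_mod_cast pow_le_fdeg_rect hK ha hb

/-- if `a_s, b_s → ∞` are sequences of positive integers and
`μ(s) = (b_s^{a_s})`, then for every `β > 0` eventually `f^{μ(s)} > β^{a_s b_s}`. -/
theorem stmt6 (a b : ℕ → ℕ) (ha : ∀ s, 1 ≤ a s) (hb : ∀ s, 1 ≤ b s)
    (hta : Filter.Tendsto a Filter.atTop Filter.atTop)
    (htb : Filter.Tendsto b Filter.atTop Filter.atTop)
    (β : ℝ) (hβ : 0 < β) :
    ∃ s0 : ℕ, ∀ s ≥ s0, β ^ (a s * b s) < (fdeg (rect (a s) (b s)) : ℝ) :=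
  stmt6_general a b hta htb β hβ
end

section
/- Let {λ^{(n)}}_{n≥1} be a sequence of partitions with λ^{(n)} ⊢ n, and suppose there exists ε > 0 such that δ(λ^{(n)})² / n ≥ ε for all sufficiently large n. Then for every real γ > 1 there exists n_0 such that f^{λ^{(n)}} ≥ γ^n for every n ≥ n_0. -/
namespace Stmt8Aux


/-- Triangular numbers. -/
def tri : ℕ → ℕ
  | 0 => 0
  | k + 1 => tri k + (k + 1)

lemma tri_mono : Monotone tri := by
  apply monotone_nat_of_le_succ
  intro k
  simp only [tri]
  omega

/-- The key (linear-order rank surrogate) of a cell. -/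
def key (n δ : ℕ) (f : ℕ → ℕ → ℕ) (c : ℕ × ℕ) : ℕ :=
  if c.1 + c.2 < δ then tri (c.1 + c.2) + f (c.1 + c.2) c.1
  else tri δ + (c.1 + 1) * (n + 1) + c.2

/-- Bound for inside keys. -/
lemma key_lt_tri (n δ : ℕ) (f : ℕ → ℕ → ℕ) (hf : ∀ k i, f k i ≤ k)
    {c : ℕ × ℕ} (h : c.1 + c.2 < δ) : key n δ f c < tri δ := by
  rw [key, if_pos h]
  calc tri (c.1 + c.2) + f (c.1 + c.2) c.1 < tri (c.1 + c.2) + (c.1 + c.2 + 1) := by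
        have := hf (c.1 + c.2) c.1; omega
    _ = tri (c.1 + c.2 + 1) := by simp [tri]
    _ ≤ tri δ := tri_mono h

lemma tri_lt_key (n δ : ℕ) (f : ℕ → ℕ → ℕ) {c : ℕ × ℕ} (h : ¬ c.1 + c.2 < δ) :
    tri δ < key n δ f c := by
  rw [key, if_neg h]
  nlinarith [Nat.succ_le_succ (Nat.zero_le c.1)]

variable {μ : YoungDiagram}

lemma col_lt_card {c : ℕ × ℕ} (hc : c ∈ μ.cells) : c.2 < μ.card := by
  have hsub : ({c.1} ×ˢ Finset.range (c.2 + 1)) ⊆ μ.cells := by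
    intro x hx
    simp only [Finset.mem_product, Finset.mem_singleton, Finset.mem_range] at hx
    have : (x.1, x.2) ∈ μ := μ.up_left_mem (le_of_eq hx.1) (by omega) hc
    simpa using this
  have := Finset.card_le_card hsub
  simp [YoungDiagram.card] at this ⊢
  omega

/-- Strict monotonicity of the key along rows/columns. -/
lemma key_lt_key (δ : ℕ) (f : ℕ → ℕ → ℕ) (hf : ∀ k i, f k i ≤ k)
    {c c' : ℕ × ℕ} (hc : c ∈ μ.cells) (hc' : c' ∈ μ.cells)
    (h1 : c.1 ≤ c'.1) (h2 : c.2 ≤ c'.2) (hne : c ≠ c') :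
    key μ.card δ f c < key μ.card δ f c' := by
  have hsum : c.1 + c.2 < c'.1 + c'.2 := by
    rcases Nat.lt_or_ge (c.1 + c.2) (c'.1 + c'.2) with h | h
    · exact h
    · exfalso; apply hne; have : c.1 = c'.1 ∧ c.2 = c'.2 := by omega
      exact Prod.ext this.1 this.2
  by_cases h' : c'.1 + c'.2 < δ
  · have h : c.1 + c.2 < δ := lt_trans hsum h'
    simp only [key]; rw [if_pos h, if_pos h']
    calc tri (c.1 + c.2) + f (c.1 + c.2) c.1 < tri (c.1 + c.2 + 1) := by
          have := hf (c.1 + c.2) c.1; simp [tri]; omega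
      _ ≤ tri (c'.1 + c'.2) := tri_mono hsum
      _ ≤ _ := Nat.le_add_right _ _
  · by_cases h : c.1 + c.2 < δ
    · exact lt_trans (key_lt_tri _ _ _ hf h) (tri_lt_key _ _ _ h')
    · simp only [key]; rw [if_neg h, if_neg h']
      have hb : c.2 < μ.card + 1 := by have := col_lt_card hc; omega
      rcases Nat.lt_or_ge c.1 c'.1 with hlt | hge
      · have : (c.1 + 1) * (μ.card + 1) + c.2 < (c'.1 + 1) * (μ.card + 1) := by
          calc (c.1 + 1) * (μ.card + 1) + c.2 < (c.1 + 1) * (μ.card + 1) + (μ.card + 1) := by omega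
            _ = (c.1 + 2) * (μ.card + 1) := by ring
            _ ≤ (c'.1 + 1) * (μ.card + 1) := Nat.mul_le_mul_right _ (by omega)
        omega
      · have he : c.1 = c'.1 := le_antisymm h1 hge
        have : c.2 < c'.2 := by
          rcases Nat.lt_or_ge c.2 c'.2 with h | h
          · exact h
          · exact absurd (Prod.ext he (le_antisymm h2 h)) hne
        rw [he]; omega

/-- Injectivity of the key on cells. -/
lemma key_injOn (δ : ℕ) (f : ℕ → ℕ → ℕ) (hf : ∀ k i, f k i ≤ k)
    (hinj : ∀ k, k < δ → ∀ i i', i ≤ k → i' ≤ k → f k i = f k i' → i = i') :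
    Set.InjOn (key μ.card δ f) ↑μ.cells := by
  intro c hc c' hc' heq
  simp only [Finset.coe_sort_coe, Finset.mem_coe] at hc hc'
  by_cases h : c.1 + c.2 < δ <;> by_cases h' : c'.1 + c'.2 < δ
  · -- both inside
    have hk : c.1 + c.2 = c'.1 + c'.2 := by
      by_contra hne
      rcases Nat.lt_or_ge (c.1 + c.2) (c'.1 + c'.2) with hlt | hge
      · have : key μ.card δ f c < key μ.card δ f c' := by
          simp only [key]; rw [if_pos h, if_pos h']
          calc tri (c.1 + c.2) + f (c.1 + c.2) c.1 < tri (c.1 + c.2 + 1) := by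
                have := hf (c.1 + c.2) c.1; simp [tri]; omega
            _ ≤ tri (c'.1 + c'.2) := tri_mono hlt
            _ ≤ _ := Nat.le_add_right _ _
        omega
      · have hlt : c'.1 + c'.2 < c.1 + c.2 := by omega
        have : key μ.card δ f c' < key μ.card δ f c := by
          simp only [key]; rw [if_pos h, if_pos h']
          calc tri (c'.1 + c'.2) + f (c'.1 + c'.2) c'.1 < tri (c'.1 + c'.2 + 1) := by
                have := hf (c'.1 + c'.2) c'.1; simp [tri]; omega
            _ ≤ tri (c.1 + c.2) := tri_mono hlt
            _ ≤ _ := Nat.le_add_right _ _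
        omega
    simp only [key] at heq; rw [if_pos h, if_pos h', hk] at heq
    have hfeq : f (c'.1 + c'.2) c.1 = f (c'.1 + c'.2) c'.1 := by omega
    have h1 : c.1 = c'.1 := hinj _ h' _ _ (by omega) (by omega) hfeq
    exact Prod.ext h1 (by omega)
  · exact absurd heq (ne_of_lt (lt_trans (key_lt_tri _ _ _ hf h) (tri_lt_key _ _ _ h')))
  · exact absurd heq.symm (ne_of_lt (lt_trans (key_lt_tri _ _ _ hf h') (tri_lt_key _ _ _ h)))
  · simp only [key] at heq; rw [if_neg h, if_neg h'] at heq
    have hb : c.2 < μ.card + 1 := by have := col_lt_card hc; omega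
    have hb' : c'.2 < μ.card + 1 := by have := col_lt_card hc'; omega
    have h1 : c.1 = c'.1 := by
      by_contra hne
      rcases Nat.lt_or_ge c.1 c'.1 with hlt | hge
      · have : (c.1 + 2) * (μ.card + 1) ≤ (c'.1 + 1) * (μ.card + 1) :=
          Nat.mul_le_mul_right _ (by omega)
        nlinarith
      · have hlt : c'.1 < c.1 := by omega
        have : (c'.1 + 2) * (μ.card + 1) ≤ (c.1 + 1) * (μ.card + 1) :=
          Nat.mul_le_mul_right _ (by omega)
        nlinarith
    rw [h1] at heq
    exact Prod.ext h1 (by omega)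

section
variable (μ : YoungDiagram)

/-- The tableau associated to a key-order: rank of the cell in key order. -/
noncomputable def TT (δ : ℕ) (f : ℕ → ℕ → ℕ) (c : ℕ × ℕ) : ℕ :=
  if c ∈ μ.cells then
    1 + (μ.cells.filter fun c' => key μ.card δ f c' < key μ.card δ f c).card
  else 0

variable {μ}

lemma TT_lt_TT (δ : ℕ) (f : ℕ → ℕ → ℕ) {c c' : ℕ × ℕ}
    (hc : c ∈ μ.cells) (hc' : c' ∈ μ.cells)
    (hk : key μ.card δ f c < key μ.card δ f c') : TT μ δ f c < TT μ δ f c' := by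
  rw [TT, if_pos hc, TT, if_pos hc']
  have hss : (μ.cells.filter fun d => key μ.card δ f d < key μ.card δ f c) ⊂
      (μ.cells.filter fun d => key μ.card δ f d < key μ.card δ f c') := by
    constructor
    · intro d hd
      rw [Finset.mem_filter] at hd ⊢
      exact ⟨hd.1, lt_trans hd.2 hk⟩
    · intro hsub
      have : c ∈ μ.cells.filter fun d => key μ.card δ f d < key μ.card δ f c :=
        hsub (Finset.mem_filter.mpr ⟨hc, hk⟩)
      simp at this
  have := Finset.card_lt_card hss
  omega

lemma TT_lt_iff (δ : ℕ) (f : ℕ → ℕ → ℕ) {c c' : ℕ × ℕ}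
    (hc : c ∈ μ.cells) (hc' : c' ∈ μ.cells) :
    TT μ δ f c < TT μ δ f c' ↔ key μ.card δ f c < key μ.card δ f c' := by
  constructor
  · intro h
    by_contra hk
    rcases Nat.lt_or_ge (key μ.card δ f c') (key μ.card δ f c) with h2 | h2
    · exact absurd (TT_lt_TT δ f hc' hc h2) (by omega)
    · have : key μ.card δ f c = key μ.card δ f c' := by omega
      rw [TT, if_pos hc, TT, if_pos hc', this] at h
      omega
  · exact TT_lt_TT δ f hc hc'

theorem isSYT_TT (δ : ℕ) (f : ℕ → ℕ → ℕ) (hf : ∀ k i, f k i ≤ k)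
    (hinj : ∀ k, k < δ → ∀ i i', i ≤ k → i' ≤ k → f k i = f k i' → i = i') :
    IsSYT μ (TT μ δ f) := by
  refine ⟨?_, ?_, ?_, ?_, ?_⟩
  · intro c hc
    rw [TT, if_pos hc, Finset.mem_Icc]
    refine ⟨by omega, ?_⟩
    have hsub : (μ.cells.filter fun d => key μ.card δ f d < key μ.card δ f c) ⊆
        μ.cells.erase c := by
      intro d hd
      rw [Finset.mem_filter] at hd
      refine Finset.mem_erase.mpr ⟨?_, hd.1⟩
      intro hdc; rw [hdc] at hd; omega
    have h1 := Finset.card_le_card hsub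
    have h2 : (μ.cells.erase c).card = μ.cells.card - 1 := Finset.card_erase_of_mem hc
    have h3 : 1 ≤ μ.cells.card := Finset.card_pos.mpr ⟨c, hc⟩
    have h4 : μ.card = μ.cells.card := rfl
    omega
  · intro c hc; rw [TT, if_neg hc]
  · intro c hc c' hc' heq
    simp only [Finset.coe_sort_coe, Finset.mem_coe] at hc hc'
    by_contra hne
    have hkey : key μ.card δ f c ≠ key μ.card δ f c' :=
      fun h => hne (key_injOn δ f hf hinj (by exact_mod_cast hc) (by exact_mod_cast hc') h)
    rcases Nat.lt_or_ge (key μ.card δ f c) (key μ.card δ f c') with h | h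
    · exact absurd heq (ne_of_lt (TT_lt_TT δ f hc hc' h))
    · exact absurd heq.symm (ne_of_lt (TT_lt_TT δ f hc' hc (lt_of_le_of_ne h (Ne.symm hkey))))
  · intro i j1 j2 hj hm
    have hm1 : (i, j1) ∈ μ := μ.up_left_mem le_rfl (le_of_lt hj) hm
    exact TT_lt_TT δ f hm1 hm (key_lt_key δ f hf hm1 hm le_rfl (le_of_lt hj)
      (by simp; omega))
  · intro i1 i2 j hi hm
    have hm1 : (i1, j) ∈ μ := μ.up_left_mem (le_of_lt hi) le_rfl hm
    exact TT_lt_TT δ f hm1 hm (key_lt_key δ f hf hm1 hm (le_of_lt hi) le_rfl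
      (by simp; omega))

end

/-- Turn a family of permutations of the diagonals into a plain function. -/
def toFun (δ : ℕ) (σ : ∀ k : Fin δ, Equiv.Perm (Fin (k + 1))) : ℕ → ℕ → ℕ :=
  fun k i => if h : k < δ ∧ i < k + 1 then (σ ⟨k, h.1⟩ ⟨i, h.2⟩ : ℕ) else 0

lemma toFun_le (δ : ℕ) (σ : ∀ k : Fin δ, Equiv.Perm (Fin (k + 1))) (k i : ℕ) :
    toFun δ σ k i ≤ k := by
  rw [toFun]
  split
  · rename_i h
    have := (σ ⟨k, h.1⟩ ⟨i, h.2⟩).isLt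
    simp only [Fin.val_mk] at this
    omega
  · omega

lemma toFun_inj (δ : ℕ) (σ : ∀ k : Fin δ, Equiv.Perm (Fin (k + 1))) :
    ∀ k, k < δ → ∀ i i', i ≤ k → i' ≤ k → toFun δ σ k i = toFun δ σ k i' → i = i' := by
  intro k hk i i' hi hi' h
  simp only [toFun] at h
  rw [dif_pos (⟨hk, by omega⟩ : k < δ ∧ i < k + 1), dif_pos (⟨hk, by omega⟩ : k < δ ∧ i' < k + 1)] at h
  have h2 := (σ ⟨k, hk⟩).injective (Fin.val_injective h)
  exact congrArg Fin.val h2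

lemma key_diag (n δ : ℕ) (σ : ∀ k : Fin δ, Equiv.Perm (Fin (k + 1)))
    (k : Fin δ) (i : Fin ((k : ℕ) + 1)) :
    key n δ (toFun δ σ) ((i : ℕ), (k : ℕ) - (i : ℕ)) = tri k + (σ k i : ℕ) := by
  have hs : (i : ℕ) + ((k : ℕ) - (i : ℕ)) = (k : ℕ) := by
    have := i.isLt; omega
  simp only [key]
  simp only [hs]
  rw [if_pos k.isLt, toFun, dif_pos ⟨k.isLt, i.isLt⟩]

lemma perm_val_count {m : ℕ} (π : Equiv.Perm (Fin m)) (x : Fin m) :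
    (π x : ℕ) = (Finset.univ.filter fun y => π y < π x).card := by
  rw [← Fin.card_Iio (π x)]
  symm
  apply Finset.card_bij (fun y _ => π y)
  · intro a ha
    simp only [Finset.mem_filter] at ha
    exact Finset.mem_Iio.mpr ha.2
  · intro a _ b _ h
    exact π.injective h
  · intro b hb
    refine ⟨π.symm b, ?_, by simp⟩
    simp only [Finset.mem_filter, Finset.mem_univ, true_and, Equiv.apply_symm_apply]
    exact Finset.mem_Iio.mp hb

theorem prod_factorial_le_fdeg (μ : YoungDiagram) (δ : ℕ)
    (hsq : ∀ i j : ℕ, i + j < δ → (i, j) ∈ μ) :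
    ∏ k ∈ Finset.range δ, Nat.factorial (k + 1) ≤ fdeg μ := by
  -- finiteness of the SYT type
  haveI : Finite { T : ℕ × ℕ → ℕ // IsSYT μ T } := by
    let g : { T : ℕ × ℕ → ℕ // IsSYT μ T } → ({ c // c ∈ μ.cells } → Finset.Icc 1 μ.card) :=
      fun T c => ⟨T.1 c, T.2.1 c c.2⟩
    apply Finite.of_injective g
    intro T T' h
    apply Subtype.ext
    funext c
    by_cases hc : c ∈ μ.cells
    · have := congrFun h ⟨c, hc⟩
      simpa [g, Subtype.ext_iff] using this
    · rw [T.2.2.1 c hc, T'.2.2.1 c hc]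
  -- the injection from families of permutations
  let F : (∀ k : Fin δ, Equiv.Perm (Fin ((k : ℕ) + 1))) → { T : ℕ × ℕ → ℕ // IsSYT μ T } :=
    fun σ => ⟨TT μ δ (toFun δ σ), isSYT_TT δ _ (toFun_le δ σ) (toFun_inj δ σ)⟩
  have hcell : ∀ (k : Fin δ) (j : Fin ((k : ℕ) + 1)), ((j : ℕ), (k : ℕ) - (j : ℕ)) ∈ μ.cells := by
    intro k j
    have := j.isLt; have := k.isLt
    exact hsq _ _ (by omega)
  have hF : Function.Injective F := by
    intro σ τ h
    have hT : TT μ δ (toFun δ σ) = TT μ δ (toFun δ τ) := congrArg Subtype.val h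
    have e1 : ∀ (ρ : ∀ k : Fin δ, Equiv.Perm (Fin ((k : ℕ) + 1))) (k : Fin δ)
        (a b : Fin ((k : ℕ) + 1)),
        (ρ k a < ρ k b ↔ TT μ δ (toFun δ ρ) ((a : ℕ), (k : ℕ) - (a : ℕ)) <
          TT μ δ (toFun δ ρ) ((b : ℕ), (k : ℕ) - (b : ℕ))) := by
      intro ρ k a b
      rw [TT_lt_iff _ _ (hcell k a) (hcell k b), key_diag, key_diag, Fin.lt_def]
      omega
    funext k
    apply Equiv.ext
    intro i
    apply Fin.val_injective
    rw [perm_val_count (σ k) i, perm_val_count (τ k) i]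
    congr 1
    apply Finset.filter_congr
    intro y _
    exact ((e1 σ k y i).trans (by rw [hT])).trans (e1 τ k y i).symm
  calc ∏ k ∈ Finset.range δ, Nat.factorial (k + 1)
      = ∏ k : Fin δ, Nat.factorial ((k : ℕ) + 1) := (Fin.prod_univ_eq_prod_range _ _).symm
    _ = Nat.card (∀ k : Fin δ, Equiv.Perm (Fin ((k : ℕ) + 1))) := by
        rw [Nat.card_eq_fintype_card, Fintype.card_pi]
        apply Finset.prod_congr rfl
        intro k _
        rw [Fintype.card_perm, Fintype.card_fin]
    _ ≤ fdeg μ := Nat.card_le_card_of_injective F hF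
lemma mem_of_lt_durfee (μ : YoungDiagram) {i : ℕ} (h : i < durfee μ) : (i, i) ∈ μ := by
  set I : Finset ℕ := (μ.cells.filter fun c => c.1 = c.2).image Prod.fst with hI
  have hIcard : I.card = durfee μ := by
    rw [hI]
    apply Finset.card_image_of_injOn
    intro c hc c' hc' hcc
    simp only [Finset.mem_coe, Finset.mem_filter] at hc hc'
    exact Prod.ext hcc (by rw [← hc.2, ← hc'.2, hcc])
  have hmemI : ∀ m, m ∈ I ↔ (m, m) ∈ μ := by
    intro m
    rw [hI]
    simp only [Finset.mem_image, Finset.mem_filter]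
    constructor
    · rintro ⟨c, ⟨hc, he⟩, hf⟩
      have : c = (m, m) := Prod.ext hf (by omega)
      rw [this] at hc
      exact (YoungDiagram.mem_cells _).mp hc
    · intro hm
      exact ⟨(m, m), ⟨(YoungDiagram.mem_cells _).mpr hm, rfl⟩, rfl⟩
  rw [← hmemI]
  by_contra hiI
  have hsub : I ⊆ Finset.range i := by
    intro m hm
    rw [Finset.mem_range]
    by_contra hge
    apply hiI
    rw [hmemI] at hm ⊢
    exact μ.up_left_mem (by omega) (by omega) hm
  have := Finset.card_le_card hsub
  rw [hIcard, Finset.card_range] at this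
  omega

lemma pow_le_fact {M a : ℕ} (h : M ≤ a) : M ^ (a - M) ≤ Nat.factorial a := by
  calc M ^ (a - M) ≤ (M + 1) ^ (a - M) := Nat.pow_le_pow_left (by omega) _
    _ ≤ Nat.factorial M * (M + 1) ^ (a - M) :=
        Nat.le_mul_of_pos_left _ (Nat.factorial_pos M)
    _ ≤ Nat.factorial (M + (a - M)) := Nat.factorial_mul_pow_le_factorial
    _ = Nat.factorial a := by congr 1; omega

lemma fact_pow_le_prod (δ a : ℕ) (h : 2 * a ≤ δ) :
    (Nat.factorial a) ^ a ≤ ∏ k ∈ Finset.range δ, Nat.factorial (k + 1) := by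
  have hsub : Finset.Ico (δ - a) δ ⊆ Finset.range δ := by
    intro x hx
    rw [Finset.mem_Ico] at hx
    rw [Finset.mem_range]
    exact hx.2
  calc (Nat.factorial a) ^ a = ∏ _k ∈ Finset.Ico (δ - a) δ, Nat.factorial a := by
        rw [Finset.prod_const, Nat.card_Ico]
        congr 1
        omega
    _ ≤ ∏ k ∈ Finset.Ico (δ - a) δ, Nat.factorial (k + 1) := by
        apply Finset.prod_le_prod' <;> try skip
        intro k hk
        rw [Finset.mem_Ico] at hk
        exact Nat.factorial_le (by omega)
    _ ≤ ∏ k ∈ Finset.range δ, Nat.factorial (k + 1) :=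
        Finset.prod_le_prod_of_subset_of_one_le' hsub
          (fun k _ _ => Nat.one_le_iff_ne_zero.mpr (Nat.factorial_ne_zero _))

theorem stmt8' (lam : ℕ → YoungDiagram) (hcard : ∀ n ≥ 1, (lam n).card = n)
    (ε : ℝ) (hε : 0 < ε) (N : ℕ)
    (hδ : ∀ n ≥ N, ε ≤ ((durfee (lam n) : ℝ)) ^ 2 / (n : ℝ)) :
    ∀ γ : ℝ, 1 < γ → ∃ n0 : ℕ, ∀ n ≥ n0, γ ^ n ≤ (fdeg (lam n) : ℝ) := by
  intro γ hγ
  set K : ℕ := ⌈(32 : ℝ) / ε⌉₊ with hK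
  have hKge : (32 : ℝ) / ε ≤ K := Nat.le_ceil _
  set M : ℕ := ⌈γ ^ K⌉₊ with hM
  have hMge : γ ^ K ≤ (M : ℝ) := Nat.le_ceil _
  have hM1 : 1 ≤ M := by
    have h1 : (1 : ℝ) ≤ γ ^ K := by
      calc (1 : ℝ) = γ ^ 0 := (pow_zero γ).symm
        _ ≤ γ ^ K := pow_le_pow_right₀ hγ.le (Nat.zero_le K)
    have : (1 : ℝ) ≤ (M : ℝ) := le_trans h1 hMge
    exact_mod_cast this
  set D0 : ℕ := 4 * M + 4 with hD0
  set n1 : ℕ := ⌈((D0 : ℝ) ^ 2) / ε⌉₊ with hn1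
  refine ⟨N + n1 + 1, ?_⟩
  intro n hn
  have hn1' : (n : ℕ) ≥ 1 := by omega
  have hcn : (lam n).card = n := hcard n hn1'
  set d : ℕ := durfee (lam n) with hd
  have hdn : ε ≤ (d : ℝ) ^ 2 / (n : ℝ) := hδ n (by omega)
  have hnpos : (0 : ℝ) < (n : ℝ) := by exact_mod_cast hn1'
  have h1 : ε * (n : ℝ) ≤ (d : ℝ) ^ 2 := by
    rw [le_div_iff₀ hnpos] at hdn
    exact hdn
  have hD0n : ((D0 : ℝ)) ^ 2 ≤ ε * (n : ℝ) := by
    have h2 : ((D0 : ℝ)) ^ 2 / ε ≤ (n1 : ℝ) := Nat.le_ceil _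
    have h3 : (n1 : ℝ) ≤ (n : ℝ) := by exact_mod_cast (by omega : n1 ≤ n)
    rw [div_le_iff₀ hε] at h2
    calc ((D0 : ℝ)) ^ 2 ≤ (n1 : ℝ) * ε := h2
      _ ≤ (n : ℝ) * ε := by nlinarith
      _ = ε * (n : ℝ) := mul_comm _ _
  have hdD0 : D0 ≤ d := by
    by_contra hc
    push_neg at hc
    have : (d : ℝ) < (D0 : ℝ) := by exact_mod_cast hc
    have : (d : ℝ) ^ 2 < (D0 : ℝ) ^ 2 := by
      apply pow_lt_pow_left₀ this (by positivity)
      omega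
    linarith
  set a : ℕ := d / 2 with ha
  have h2a : 2 * a ≤ d := by omega
  have h2a1 : d ≤ 2 * a + 1 := by omega
  have haM : 2 * M + 1 ≤ a := by omega
  have hMa : M ≤ a := by omega
  -- the key exponent inequality, proven over ℝ
  have hexp : n ≤ K * ((a - M) * a) := by
    have hcast : ((a - M : ℕ) : ℝ) = (a : ℝ) - (M : ℝ) := by
      push_cast [Nat.cast_sub hMa]; ring
    have hA : (2 : ℝ) * (a : ℝ) + 1 ≥ (d : ℝ) := by exact_mod_cast h2a1
    have hAM : (a : ℝ) ≥ 2 * (M : ℝ) + 1 := by exact_mod_cast haM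
    have hDge : (d : ℝ) ≥ 8 := by
      have : (8 : ℕ) ≤ d := by omega
      exact_mod_cast this
    have f1 : (a : ℝ) - (M : ℝ) ≥ (a : ℝ) / 2 := by linarith
    have f2 : (a : ℝ) ≥ (d : ℝ) / 4 := by linarith
    have ha0 : (0 : ℝ) ≤ (a : ℝ) := Nat.cast_nonneg _
    have hd0 : (0 : ℝ) ≤ (d : ℝ) := Nat.cast_nonneg _
    have hprod : (d : ℝ) ^ 2 / 32 ≤ ((a : ℝ) - (M : ℝ)) * (a : ℝ) := by
      calc (d : ℝ) ^ 2 / 32 = ((d : ℝ) / 8) * ((d : ℝ) / 4) := by ring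
        _ ≤ ((a : ℝ) / 2) * (a : ℝ) := by
            apply mul_le_mul (by linarith) f2 (by linarith) (by linarith)
        _ ≤ ((a : ℝ) - (M : ℝ)) * (a : ℝ) := mul_le_mul_of_nonneg_right f1 ha0
    have hfin : (n : ℝ) ≤ (K : ℝ) * (((a : ℝ) - (M : ℝ)) * (a : ℝ)) := by
      have e1 : (n : ℝ) ≤ (d : ℝ) ^ 2 / ε := by
        rw [le_div_iff₀ hε]
        linarith
      have e2 : (d : ℝ) ^ 2 / ε ≤ (K : ℝ) * ((d : ℝ) ^ 2 / 32) := by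
        have := mul_le_mul_of_nonneg_right hKge (by positivity : (0 : ℝ) ≤ (d : ℝ) ^ 2 / 32)
        calc (d : ℝ) ^ 2 / ε = (32 / ε) * ((d : ℝ) ^ 2 / 32) := by
              field_simp
            _ ≤ (K : ℝ) * ((d : ℝ) ^ 2 / 32) := this
      have e3 : (K : ℝ) * ((d : ℝ) ^ 2 / 32) ≤ (K : ℝ) * (((a : ℝ) - (M : ℝ)) * (a : ℝ)) :=
        mul_le_mul_of_nonneg_left hprod (Nat.cast_nonneg _)
      linarith
    have : (n : ℝ) ≤ ((K * ((a - M) * a) : ℕ) : ℝ) := by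
      push_cast [Nat.cast_sub hMa]
      calc (n : ℝ) ≤ (K : ℝ) * (((a : ℝ) - (M : ℝ)) * (a : ℝ)) := hfin
        _ = _ := by ring
    exact_mod_cast this
  -- nat chain
  have hnat : M ^ ((a - M) * a) ≤ fdeg (lam n) := by
    calc M ^ ((a - M) * a) = (M ^ (a - M)) ^ a := by rw [pow_mul]
      _ ≤ (Nat.factorial a) ^ a := Nat.pow_le_pow_left (pow_le_fact hMa) _
      _ ≤ ∏ k ∈ Finset.range d, Nat.factorial (k + 1) := fact_pow_le_prod d a h2a
      _ ≤ fdeg (lam n) := by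
          apply prod_factorial_le_fdeg (lam n) d
          intro i j hij
          have hd1 : (d - 1, d - 1) ∈ lam n := mem_of_lt_durfee _ (by omega)
          exact (lam n).up_left_mem (by omega) (by omega) hd1
  -- real chain
  calc γ ^ n ≤ γ ^ (K * ((a - M) * a)) := pow_le_pow_right₀ hγ.le hexp
    _ = (γ ^ K) ^ ((a - M) * a) := by rw [pow_mul]
    _ ≤ (M : ℝ) ^ ((a - M) * a) := by
        apply pow_le_pow_left₀ (by positivity) hMge
    _ = ((M ^ ((a - M) * a) : ℕ) : ℝ) := by push_cast; ring
    _ ≤ (fdeg (lam n) : ℝ) := by exact_mod_cast hnat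
end Stmt8Aux

/-- if `λ^{(n)} ⊢ n` and there is `ε > 0` with `δ(λ^{(n)})²/n ≥ ε`
for all large `n`, then for every `γ > 1` eventually `f^{λ^{(n)}} ≥ γ^n`. -/
theorem stmt8 (lam : ℕ → YoungDiagram) (hcard : ∀ n ≥ 1, (lam n).card = n)
    (ε : ℝ) (hε : 0 < ε) (N : ℕ)
    (hδ : ∀ n ≥ N, ε ≤ ((durfee (lam n) : ℝ)) ^ 2 / (n : ℝ)) :
    ∀ γ : ℝ, 1 < γ → ∃ n0 : ℕ, ∀ n ≥ n0, γ ^ n ≤ (fdeg (lam n) : ℝ) := by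
  exact Stmt8Aux.stmt8' lam hcard ε hε N hδ
end
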